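/- arXiv:1307.7816 — 2 statements merged into one kernel-verified Lean document; each statement's English description precedes it below -/
import Mathlib

section
/- The odd divided difference operator ∂_i, defined on generators by ∂_i(x_j) = 1 if j ∈ {i, i+1} and 0 otherwise, together with the twisted Leibniz rule ∂_i(fg) = ∂_i(f)g + (-1)^{|f|} s_i(f) ∂_i(g) for ℤ-homogeneous f (with |x_j| = 2), gives a well-defined k-linear endomorphism of the skew polynomial ring SPol_n. -/
noncomputable section

/-- The defining relations of the skew polynomial ring: `x_i x_j = -x_j x_i` for `i ≠ j`. -/
inductive SkewRel (k : Type*) [CommRing k] (n : ℕ) :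
    FreeAlgebra k (Fin n) → FreeAlgebra k (Fin n) → Prop
  | skew (i j : Fin n) (h : i ≠ j) :
      SkewRel k n (FreeAlgebra.ι k i * FreeAlgebra.ι k j)
        (-(FreeAlgebra.ι k j * FreeAlgebra.ι k i))

/-- The ring of skew polynomials `SPol_n = k⟨x_1,…,x_n⟩/(x_i x_j + x_j x_i, i ≠ j)`. -/
abbrev SPol (k : Type*) [CommRing k] (n : ℕ) : Type _ := RingQuot (SkewRel k n)

/-- The generators `x_i` of the skew polynomial ring. -/
def SPol.X (k : Type*) [CommRing k] (n : ℕ) (i : Fin n) : SPol k n :=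
  RingQuot.mkAlgHom k (SkewRel k n) (FreeAlgebra.ι k i)

/-- The monomial `x_{l₁} ⋯ x_{l_r}` associated to a word `l` in the generators. -/
def SPol.mon (k : Type*) [CommRing k] (n : ℕ) (l : List (Fin n)) : SPol k n :=
  (l.map (SPol.X k n)).prod

/-- The homogeneous component of `SPol_n` spanned by the monomials in `m` generators;
these are the homogeneous elements of `ℤ`-degree `2m` for the grading with `|x_i| = 2`
(equivalently, of parity `m`). -/
def SPol.homog (k : Type*) [CommRing k] (n : ℕ) (m : ℕ) : Submodule k (SPol k n) :=
  Submodule.span k {f | ∃ l : List (Fin n), l.length = m ∧ f = SPol.mon k n l}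

/-- `D` is the odd divided difference operator for the simple transposition exchanging the
(adjacent) indices `i` and `i'`, where `s` is the algebra endomorphism permuting the
variables accordingly: `D` takes the value `1` on `x_i` and `x_{i'}` and `0` on the other
generators, and satisfies the twisted Leibniz rule
`∂(fg) = ∂(f)g + (-1)^m s(f) ∂(g)` for `f` homogeneous of `ℤ`-degree `2m`. -/
def IsOddDD (k : Type*) [CommRing k] (n : ℕ) (i i' : Fin n)
    (s : SPol k n →ₐ[k] SPol k n) (D : SPol k n →ₗ[k] SPol k n) : Prop :=
  (∀ j : Fin n, s (SPol.X k n j) = SPol.X k n (Equiv.swap i i' j)) ∧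
  (∀ j : Fin n, D (SPol.X k n j) = if j = i ∨ j = i' then 1 else 0) ∧
  (∀ (m : ℕ) (f g : SPol k n), f ∈ SPol.homog k n m →
      D (f * g) = D f * g + ((-1 : ℤ) ^ m) • (s f * D g))

/-!
A twisted derivation `D(fg) = D(f) g + σ(f) D(g)` is the same thing as the algebra map
`f ↦ !![σ f, D f; 0, f]` into upper triangular `2 × 2` matrices. Here `σ = s ∘ ε`, where `ε` is
the parity automorphism `x_j ↦ -x_j`, so that `σ f = (-1)^m s(f)` for `f` of degree `2m`. Since
`SPol_n` is presented by generators and relations, the matrix-valued map exists as soon as the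
matrices assigned to the `x_j` anticommute pairwise, which is a finite check on generators.
-/

section UpperTriangular

variable {R A B : Type*} [CommSemiring R] [Semiring A] [Algebra R A] [Semiring B] [Algebra R B]
  {σ φ : A →ₐ[R] B} {Ψ : A →ₐ[R] Matrix (Fin 2) (Fin 2) B}

theorem upperTriangular_of_mem_adjoin {s : Set A}
    (hs : ∀ x ∈ s, Ψ x 1 0 = 0 ∧ Ψ x 0 0 = σ x ∧ Ψ x 1 1 = φ x) {f : A}
    (hf : f ∈ Algebra.adjoin R s) : Ψ f 1 0 = 0 ∧ Ψ f 0 0 = σ f ∧ Ψ f 1 1 = φ f := by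
  induction hf using Algebra.adjoin_induction with
  | mem x hx => exact hs x hx
  | algebraMap r => simp [Matrix.algebraMap_matrix_apply]
  | add x y _ _ hx hy => simp [hx.1, hx.2.1, hx.2.2, hy.1, hy.2.1, hy.2.2]
  | mul x y _ _ hx hy =>
    simp [Matrix.mul_apply, Fin.sum_univ_two, hx.1, hx.2.1, hx.2.2, hy.1, hy.2.1, hy.2.2]

theorem upperTriangular_map_mul_zero_one {f g : A} (hf : Ψ f 0 0 = σ f) (hg : Ψ g 1 1 = φ g) :
    Ψ (f * g) 0 1 = Ψ f 0 1 * φ g + σ f * Ψ g 0 1 := by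
  rw [map_mul, Matrix.mul_apply, Fin.sum_univ_two, hf, hg, add_comm]

end UpperTriangular

namespace SPol

variable {k : Type*} [CommRing k] {n : ℕ}

theorem X_mul_X_of_ne {a b : Fin n} (h : a ≠ b) :
    X k n a * X k n b = -(X k n b * X k n a) := by
  have hrel := RingQuot.mkAlgHom_rel k (SkewRel.skew (k := k) a b h)
  simp only [map_mul, map_neg] at hrel
  exact hrel

theorem adjoin_range_X : Algebra.adjoin k (Set.range (X k n)) = ⊤ := by
  rw [show X k n = RingQuot.mkAlgHom k (SkewRel k n) ∘ FreeAlgebra.ι k from rfl, Set.range_comp,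
    Algebra.adjoin_image, FreeAlgebra.adjoin_range_ι, Algebra.map_top, AlgHom.range_eq_top]
  exact RingQuot.mkAlgHom_surjective k (SkewRel k n)

section Lift

variable {B : Type*} [Ring B] [Algebra k B]

def lift (x : Fin n → B) (hx : ∀ a b, a ≠ b → x a * x b = -(x b * x a)) :
    SPol k n →ₐ[k] B :=
  RingQuot.liftAlgHom k ⟨FreeAlgebra.lift k x, by rintro _ _ ⟨a, b, h⟩; simpa using hx a b h⟩

@[simp]
theorem lift_X (x : Fin n → B) (hx : ∀ a b, a ≠ b → x a * x b = -(x b * x a)) (j : Fin n) :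
    lift x hx (X k n j) = x j := by
  simp [lift, X, RingQuot.liftAlgHom_mkAlgHom_apply]

end Lift

variable (k n) in
def perm (e : Equiv.Perm (Fin n)) : SPol k n →ₐ[k] SPol k n :=
  lift (fun j => X k n (e j)) fun _ _ h => X_mul_X_of_ne (e.injective.ne h)

variable (k n) in
def parity : SPol k n →ₐ[k] SPol k n :=
  lift (fun j => -X k n j) fun _ _ h =>
    (neg_mul_neg _ _).trans <| (X_mul_X_of_ne h).trans <| congrArg Neg.neg (neg_mul_neg _ _).symm

@[simp]
theorem perm_X (e : Equiv.Perm (Fin n)) (j : Fin n) : perm k n e (X k n j) = X k n (e j) :=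
  lift_X _ _ j

@[simp]
theorem parity_X (j : Fin n) : parity k n (X k n j) = -X k n j :=
  lift_X _ _ j

theorem parity_mon (l : List (Fin n)) :
    parity k n (mon k n l) = ((-1 : ℤ) ^ l.length) • mon k n l := by
  have hX : parity k n ∘ X k n = Neg.neg ∘ X k n := funext parity_X
  simp only [mon, map_list_prod, List.map_map]
  rw [hX, ← List.map_map, zsmul_eq_mul]
  refine (List.prod_map_neg (M := SPol k n) _).trans ?_
  simp

theorem parity_of_mem_homog {m : ℕ} {f : SPol k n} (hf : f ∈ homog k n m) :
    parity k n f = ((-1 : ℤ) ^ m) • f := by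
  induction hf using Submodule.span_induction with
  | mem x hx => obtain ⟨l, rfl, rfl⟩ := hx; exact parity_mon l
  | zero => simp
  | add x y _ _ hx hy => rw [map_add, hx, hy]; exact (smul_add _ _ _).symm
  | smul c x _ hx => rw [map_smul, hx, smul_comm]

section OddDividedDifference

open Equiv

variable (i i' : Fin n)

def twistedSwap : SPol k n →ₐ[k] SPol k n :=
  (perm k n (swap i i')).comp (parity k n)

@[simp]
theorem twistedSwap_X (j : Fin n) : twistedSwap i i' (X k n j) = -X k n (swap i i' j) := by
  simp [twistedSwap]

variable (k) in
def oddDDGen (j : Fin n) : Matrix (Fin 2) (Fin 2) (SPol k n) :=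
  !![twistedSwap i i' (X k n j), if j = i ∨ j = i' then 1 else 0; 0, X k n j]

theorem oddDDGen_mul_of_ne {a b : Fin n} (h : a ≠ b) :
    oddDDGen k i i' a * oddDDGen k i i' b = -(oddDDGen k i i' b * oddDDGen k i i' a) := by
  set d : Fin n → SPol k n := fun j => if j = i ∨ j = i' then 1 else 0 with hd
  have h00 : twistedSwap i i' (X k n a) * twistedSwap i i' (X k n b) + d a * 0 =
      -(twistedSwap i i' (X k n b) * twistedSwap i i' (X k n a) + d b * 0) := by
    rw [mul_zero, add_zero, mul_zero, add_zero, ← map_mul, ← map_mul, X_mul_X_of_ne h, map_neg]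
  have h01 : twistedSwap i i' (X k n a) * d b + d a * X k n b =
      -(twistedSwap i i' (X k n b) * d a + d b * X k n a) := by
    by_cases ha : a = i ∨ a = i' <;> by_cases hb : b = i ∨ b = i'
    · have hab : swap i i' a = b := by
        rcases ha with rfl | rfl <;> rcases hb with rfl | rfl <;> simp_all
      have hba : swap i i' b = a := by rw [← hab, swap_apply_self]
      simp [hd, ha, hb, hab, hba]
    · simp [hd, ha, hb, swap_apply_of_ne_of_ne (not_or.mp hb).1 (not_or.mp hb).2]
    · simp [hd, ha, hb, swap_apply_of_ne_of_ne (not_or.mp ha).1 (not_or.mp ha).2]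
    · simp [hd, ha, hb]
  have h10 : (0 : SPol k n) * twistedSwap i i' (X k n b) + X k n a * 0 =
      -(0 * twistedSwap i i' (X k n a) + X k n b * 0) := by
    simp
  have h11 : 0 * d b + X k n a * X k n b = -(0 * d a + X k n b * X k n a) := by
    rw [zero_mul, zero_add, zero_mul, zero_add, X_mul_X_of_ne h]
  rw [oddDDGen, oddDDGen, Matrix.mul_fin_two, Matrix.mul_fin_two]
  ext p q
  fin_cases p <;> fin_cases q
  exacts [h00, h01, h10, h11]

variable (k) in
def oddDDRep : SPol k n →ₐ[k] Matrix (Fin 2) (Fin 2) (SPol k n) :=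
  lift (oddDDGen k i i') fun _ _ => oddDDGen_mul_of_ne i i'

theorem oddDDRep_upperTriangular (f : SPol k n) :
    oddDDRep k i i' f 1 0 = 0 ∧ oddDDRep k i i' f 0 0 = twistedSwap i i' f ∧
      oddDDRep k i i' f 1 1 = f :=
  upperTriangular_of_mem_adjoin (φ := AlgHom.id k _)
    (by rintro _ ⟨j, rfl⟩; simp [oddDDRep, oddDDGen])
    (adjoin_range_X (k := k) ▸ Algebra.mem_top)

variable (k) in
def oddDD : SPol k n →ₗ[k] SPol k n :=
  (Matrix.entryLinearMap k (SPol k n) 0 1).comp (oddDDRep k i i').toLinearMap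

theorem oddDD_X (j : Fin n) : oddDD k i i' (X k n j) = if j = i ∨ j = i' then 1 else 0 := by
  simp [oddDD, oddDDRep, oddDDGen]

theorem oddDD_mul (f g : SPol k n) :
    oddDD k i i' (f * g) = oddDD k i i' f * g + twistedSwap i i' f * oddDD k i i' g :=
  upperTriangular_map_mul_zero_one (φ := AlgHom.id k _)
    (oddDDRep_upperTriangular i i' f).2.1 (oddDDRep_upperTriangular i i' g).2.2

end OddDividedDifference

end SPol

theorem odd_divided_difference_well_defined_general (k : Type*) [CommRing k] (n : ℕ)
    (i i' : Fin n) :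
    ∃ (s : SPol k n →ₐ[k] SPol k n) (D : SPol k n →ₗ[k] SPol k n),
      IsOddDD k n i i' s D :=
  ⟨SPol.perm k n (Equiv.swap i i'), SPol.oddDD k i i', SPol.perm_X _, SPol.oddDD_X i i',
    fun _ f g hf => by
      rw [SPol.oddDD_mul, SPol.twistedSwap, AlgHom.comp_apply, SPol.parity_of_mem_homog hf,
        map_zsmul, smul_mul_assoc]⟩

/-- the odd divided difference operator `∂_i`, defined on generators by
`∂_i(x_j) = 1` if `j ∈ {i, i+1}` and `0` otherwise, together with the twisted Leibniz
rule, gives a well-defined `k`-linear endomorphism of `SPol_n` (here `s` is the algebra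
endomorphism of `SPol_n` induced by the simple transposition `s_i`). -/
theorem odd_divided_difference_well_defined (k : Type*) [CommRing k] (n : ℕ)
    (i i' : Fin n) (hii' : (i' : ℕ) = (i : ℕ) + 1) :
    ∃ (s : SPol k n →ₐ[k] SPol k n) (D : SPol k n →ₗ[k] SPol k n),
      IsOddDD k n i i' s D :=
  odd_divided_difference_well_defined_general k n i i'

end
end

section
/- Each odd divided difference operator satisfies ∂_i² = 0 as an operator on the skew polynomial ring SPol_n. -/
/-!
Writing `σ` for the transposition of `i` and `i'`, the twisted Leibniz rule on a generator gives
`∂(x_j g) = ∂(x_j) g - x_{σ j} ∂g`. Since `∂(x_j)` is the constant `0` or `1` and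
`∂(x_{σ j}) = ∂(x_j)`, applying `∂` once more turns both terms into `∂(x_j) ∂g` as soon as
`∂²g = 0`, so they cancel. Induction on the length of a monomial gives `∂² = 0` on monomials,
and the monomials span `SPol_n`.
-/

noncomputable section

namespace SPol

variable {k : Type*} [CommRing k] {n : ℕ}

@[simp]
theorem mon_nil : mon k n [] = 1 := by
  simp [mon]

@[simp]
theorem mon_cons (j : Fin n) (l : List (Fin n)) : mon k n (j :: l) = X k n j * mon k n l := by
  simp [mon]

theorem mon_append (l l' : List (Fin n)) : mon k n (l ++ l') = mon k n l * mon k n l' := by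
  simp [mon]

theorem mon_mem_homog (l : List (Fin n)) : mon k n l ∈ homog k n l.length :=
  Submodule.subset_span ⟨l, rfl, rfl⟩

theorem one_mem_homog_zero : (1 : SPol k n) ∈ homog k n 0 := by
  simpa using mon_mem_homog (k := k) ([] : List (Fin n))

theorem X_mem_homog_one (j : Fin n) : X k n j ∈ homog k n 1 := by
  simpa using mon_mem_homog (k := k) [j]

theorem closure_range_X_subset : (Submonoid.closure (Set.range (X k n)) : Set (SPol k n)) ⊆
    Set.range (mon k n) := by
  intro x hx
  induction hx using Submonoid.closure_induction with
  | mem x hx =>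
    obtain ⟨j, rfl⟩ := hx
    exact ⟨[j], by simp⟩
  | one => exact ⟨[], mon_nil⟩
  | mul x y _ _ hx hy =>
    obtain ⟨l, rfl⟩ := hx
    obtain ⟨l', rfl⟩ := hy
    exact ⟨l ++ l', mon_append l l'⟩

theorem span_range_mon : Submodule.span k (Set.range (mon k n)) = ⊤ := by
  refine eq_top_iff.2 ?_
  calc (⊤ : Submodule k (SPol k n))
      = Subalgebra.toSubmodule (Algebra.adjoin k (Set.range (X k n))) := by
        rw [adjoin_range_X, Algebra.top_toSubmodule]
    _ = Submodule.span k (Submonoid.closure (Set.range (X k n))) := Algebra.adjoin_eq_span _ _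
    _ ≤ Submodule.span k (Set.range (mon k n)) := Submodule.span_mono closure_range_X_subset

end SPol

namespace IsOddDD

open SPol

variable {k : Type*} [CommRing k] {n : ℕ} {i i' : Fin n}
  {s : SPol k n →ₐ[k] SPol k n} {D : SPol k n →ₗ[k] SPol k n}

theorem map_one (hD : IsOddDD k n i i' s D) : D 1 = 0 := by
  simpa using hD.2.2 0 1 1 one_mem_homog_zero

theorem map_X_swap (hD : IsOddDD k n i i' s D) (j : Fin n) :
    D (X k n (Equiv.swap i i' j)) = D (X k n j) := by
  have hiff : (Equiv.swap i i' j = i ∨ Equiv.swap i i' j = i') ↔ (j = i ∨ j = i') := by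
    rw [Equiv.swap_apply_eq_iff, Equiv.swap_apply_eq_iff, Equiv.swap_apply_left,
      Equiv.swap_apply_right, or_comm]
  rw [hD.2.1, hD.2.1]
  simp only [hiff]

theorem map_X_mul (hD : IsOddDD k n i i' s D) (j : Fin n) (g : SPol k n) :
    D (X k n j * g) = D (X k n j) * g - X k n (Equiv.swap i i' j) * D g := by
  rw [hD.2.2 1 _ _ (X_mem_homog_one j), hD.1 j, pow_one, neg_one_zsmul, sub_eq_add_neg]

theorem map_map_X_mul (hD : IsOddDD k n i i' s D) (j : Fin n) (g : SPol k n) :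
    D (D (X k n j) * g) = D (X k n j) * D g := by
  rw [hD.2.1]
  split_ifs <;> simp

theorem map_map_mon (hD : IsOddDD k n i i' s D) (l : List (Fin n)) :
    D (D (mon k n l)) = 0 := by
  induction l with
  | nil => rw [mon_nil, hD.map_one, map_zero]
  | cons j l ih =>
    have hswap :
        D (X k n (Equiv.swap i i' j) * D (mon k n l)) = D (X k n j) * D (mon k n l) := by
      rw [hD.map_X_mul, Equiv.swap_apply_self, ih, mul_zero, sub_zero, hD.map_X_swap]
    rw [mon_cons, hD.map_X_mul, map_sub, hD.map_map_X_mul, hswap, sub_self]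

end IsOddDD

theorem odd_dd_sq_zero_general (k : Type*) [CommRing k] (n : ℕ) (i i' : Fin n)
    (s : SPol k n →ₐ[k] SPol k n) (D : SPol k n →ₗ[k] SPol k n)
    (hD : IsOddDD k n i i' s D) :
    D ∘ₗ D = 0 :=
  LinearMap.ext_on_range SPol.span_range_mon fun l => hD.map_map_mon l

/-- `∂_i² = 0` as an operator on the skew polynomial ring `SPol_n`. -/
theorem odd_dd_sq_zero (k : Type*) [CommRing k] (n : ℕ) (i i' : Fin n)
    (hii' : (i' : ℕ) = (i : ℕ) + 1)
    (s : SPol k n →ₐ[k] SPol k n) (D : SPol k n →ₗ[k] SPol k n)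
    (hD : IsOddDD k n i i' s D) :
    D ∘ₗ D = 0 :=
  odd_dd_sq_zero_general k n i i' s D hD
end
end
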